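/- Fix 0 < α ≤ 1 and 0 < μ_1 < ... < μ_j, and define β^j_i := (-1)^{j-1} μ_1···μ_j e^{μ_i} / (μ_i^2 ∏_{t=1,t≠i}^{j}(μ_i - μ_t)) and ε^j_α(μ_1,...,μ_j) := (-1)^{j-1}(Σ_{i=1}^{j} β^j_i (1 - e^{-α μ_i}) - α). Then ε^j_α(μ_1,...,μ_j) = μ_1···μ_j Σ_{n=j+1}^{∞} Σ_{i_1,...,i_j ≥ 0, i_1+...+i_j = n-1-j} (1-(1-α)^n)/n! · μ_1^{i_1}···μ_j^{i_j}, and in particular ε^j_α(μ_1,...,μ_j) ≥ 0. -/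

import Mathlib

/-- `β^j_i = (-1)^{j-1} μ_1⋯μ_j e^{μ_i} / (μ_i^2 ∏_{t=1,t≠i}^{j}(μ_i - μ_t))`. -/
noncomputable def betaCoef (j : ℕ) (μ : ℕ → ℝ) (i : ℕ) : ℝ :=
  (-1 : ℝ) ^ (j - 1) * (∏ t ∈ Finset.Icc 1 j, μ t) * Real.exp (μ i) /
    (μ i ^ 2 * ∏ t ∈ (Finset.Icc 1 j).erase i, (μ i - μ t))

/-- `ε^j_α(μ_1,…,μ_j) = (-1)^{j-1}(Σ_{i=1}^j β^j_i (1 - e^{-α μ_i}) - α)`. -/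
noncomputable def epsCoef (j : ℕ) (α : ℝ) (μ : ℕ → ℝ) : ℝ :=
  (-1 : ℝ) ^ (j - 1) *
    ((∑ i ∈ Finset.Icc 1 j, betaCoef j μ i * (1 - Real.exp (-α * μ i))) - α)

/-!
Up to the factor `(-1)^{j-1} μ_1⋯μ_j`, the sum in `ε^j_α` is the divided difference at the nodes
`μ_1, …, μ_j` of `x ↦ e^x (1 - e^{-αx}) / x² = α / x + f(x)`, where
`f(x) = Σ_{n ≥ 0} (1 - (1-α)^{n+2}) / (n+2)! xⁿ`. The divided difference of `1/x` is
`(-1)^{j-1} / (μ_1⋯μ_j)`, which cancels the `-α`, and the divided difference of `xⁿ` is the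
complete homogeneous symmetric polynomial of degree `n + 1 - j` in the nodes (zero if `n + 1 < j`).
Summing term by term gives the series, and all its terms are nonnegative when `0 ≤ α ≤ 1`.
-/

open Finset

section CompleteHomogeneous

variable {ι R : Type*} [DecidableEq ι] [CommSemiring R]

def completeHomogeneous (s : Finset ι) (v : ι → R) (p : ℕ) : R :=
  ∑ c ∈ s.piAntidiag p, ∏ i ∈ s, v i ^ c i

theorem completeHomogeneous_zero (s : Finset ι) (v : ι → R) :
    completeHomogeneous s v 0 = 1 := by
  simp [completeHomogeneous]

theorem completeHomogeneous_empty_succ (v : ι → R) (p : ℕ) :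
    completeHomogeneous ∅ v (p + 1) = 0 := by
  simp [completeHomogeneous]

theorem completeHomogeneous_cons {a : ι} {t : Finset ι} (ha : a ∉ t) (v : ι → R) (q : ℕ) :
    completeHomogeneous (cons a t ha) v q =
      ∑ p ∈ antidiagonal q, v a ^ p.1 * completeHomogeneous t v p.2 := by
  rw [completeHomogeneous, piAntidiag_cons, sum_disjiUnion]
  refine sum_congr rfl fun p _ => ?_
  rw [sum_map, completeHomogeneous, mul_sum]
  refine sum_congr rfl fun c hc => ?_
  have hca : c a = 0 := by
    by_contra h
    exact ha ((mem_piAntidiag.1 hc).2 a h)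
  rw [prod_cons]
  simp only [addRightEmbedding_apply, Pi.add_apply, hca, zero_add]
  congr 1
  refine prod_congr rfl fun i hi => ?_
  rw [if_neg (ne_of_mem_of_not_mem hi ha), add_zero]

theorem completeHomogeneous_cons_succ {a : ι} {t : Finset ι} (ha : a ∉ t) (v : ι → R) (p : ℕ) :
    completeHomogeneous (cons a t ha) v (p + 1) =
      completeHomogeneous t v (p + 1) + v a * completeHomogeneous (cons a t ha) v p := by
  simp only [completeHomogeneous_cons, Nat.sum_antidiagonal_succ, pow_zero, one_mul, mul_sum,
    pow_succ', mul_assoc]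

end CompleteHomogeneous

section DividedDifference

variable {ι F : Type*} [DecidableEq ι] [Field F]

/-- The divided difference `Δ_f(v_i : i ∈ s)` in Lagrange form; it is only meaningful when `v` is
injective on `s`, otherwise some denominators are `0`. -/
def divDiff (s : Finset ι) (v : ι → F) (f : F → F) : F :=
  ∑ i ∈ s, f (v i) / ∏ t ∈ s.erase i, (v i - v t)

variable {s : Finset ι} {v : ι → F}

theorem divDiff_add (f g : F → F) :
    divDiff s v (fun w => f w + g w) = divDiff s v f + divDiff s v g := by
  simp only [divDiff, add_div, sum_add_distrib]

theorem divDiff_const_mul (c : F) (f : F → F) :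
    divDiff s v (fun w => c * f w) = c * divDiff s v f := by
  simp only [divDiff, mul_div_assoc, mul_sum]

theorem divDiff_map {κ : Type*} [DecidableEq κ] (e : κ ↪ ι) (s : Finset κ) (f : F → F) :
    divDiff (s.map e) v f = divDiff s (v ∘ e) f := by
  simp only [divDiff, sum_map, ← map_erase, prod_map, Function.comp_apply]

theorem divDiff_cons_id_mul {a : ι} {t : Finset ι} (ha : a ∉ t) (hv : Set.InjOn v (cons a t ha))
    (f : F → F) :
    divDiff (cons a t ha) v (fun w => w * f w) =
      v a * divDiff (cons a t ha) v f + divDiff t v f := by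
  have hsplit : ∀ i ∈ t, ∏ x ∈ (cons a t ha).erase i, (v i - v x) =
      (v i - v a) * ∏ x ∈ t.erase i, (v i - v x) := fun i hi => by
    rw [erase_cons_of_ne _ (ne_of_mem_of_not_mem hi ha).symm, prod_cons]
  have hne : ∀ i ∈ t, v i - v a ≠ 0 := fun i hi => sub_ne_zero.2 fun h =>
    ne_of_mem_of_not_mem hi ha (hv (mem_cons_of_mem hi) (mem_cons_self a t) h)
  rw [divDiff, divDiff, divDiff, mul_sum, ← sub_eq_iff_eq_add', ← sum_sub_distrib, sum_cons,
    mul_div_assoc, sub_self, zero_add]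
  refine sum_congr rfl fun i hi => ?_
  rw [hsplit i hi, mul_div_assoc, ← sub_mul, ← mul_div_assoc, mul_div_mul_left _ _ (hne i hi)]

/-- Partial fractions: evaluate the Lagrange interpolant of the constant `1` at `0`. -/
theorem divDiff_inv (hv : Set.InjOn v s) (hs : s.Nonempty) (h0 : ∀ i ∈ s, v i ≠ 0) :
    divDiff s v (·⁻¹) = (-1) ^ (#s - 1) / ∏ i ∈ s, v i := by
  have hlag := Lagrange.eval_interpolate_not_at_node (v := v) 1 fun i hi => (h0 i hi).symm
  rw [Lagrange.interpolate_one hv hs, Polynomial.eval_one, Lagrange.eval_nodal] at hlag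
  set S := ∑ i ∈ s, Lagrange.nodalWeight s v i * (0 - v i)⁻¹ * (1 : ι → F) i
  have hdiv : divDiff s v (·⁻¹) = -S := by
    rw [divDiff, ← sum_neg_distrib]
    refine sum_congr rfl fun i _ => ?_
    rw [Lagrange.nodalWeight, prod_inv_distrib, Pi.one_apply, mul_one, zero_sub, inv_neg]
    ring
  obtain ⟨k, hk⟩ : ∃ k, #s = k + 1 := ⟨#s - 1, by have := hs.card_pos; omega⟩
  have hnodal : ∏ i ∈ s, (0 - v i) = (-1) ^ (k + 1) * ∏ i ∈ s, v i := by
    simp only [zero_sub, prod_neg, hk]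
  rw [hnodal] at hlag
  have hsq : ((-1 : F) ^ k) * (-1) ^ k = 1 := by rw [← mul_pow]; norm_num
  rw [hdiv, hk, Nat.add_sub_cancel, eq_div_iff (prod_ne_zero_iff.2 h0)]
  linear_combination (-(-1) ^ k) * hlag + (S * ∏ i ∈ s, v i) * hsq

theorem divDiff_pow (hv : Set.InjOn v s) (m : ℕ) :
    divDiff s v (· ^ m) =
      if #s ≤ m + 1 then completeHomogeneous s v (m + 1 - #s) else 0 := by
  induction m generalizing s with
  | zero =>
    rcases s.eq_empty_or_nonempty with rfl | hs
    · simp [divDiff, completeHomogeneous_empty_succ]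
    have hlag := Lagrange.coeff_eq_sum hv (P := 1) (by
      rw [Polynomial.degree_one]; exact_mod_cast hs.card_pos)
    simp only [Polynomial.coeff_one, Polynomial.eval_one] at hlag
    simp only [divDiff, pow_zero, ← hlag]
    have := hs.card_pos
    by_cases h1 : #s = 1
    · simp [h1, completeHomogeneous_zero]
    · rw [if_neg (by omega), if_neg (by omega)]
  | succ m ih =>
    induction s using Finset.cons_induction with
    | empty => simp [divDiff, completeHomogeneous_empty_succ]
    | cons a t ha _ =>
      rw [show (fun w : F => w ^ (m + 1)) = fun w => w * w ^ m by simp [pow_succ'],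
        divDiff_cons_id_mul ha hv, ih hv, ih (hv.mono (by simp)), card_cons]
      rcases lt_trichotomy (#t) (m + 1) with h | h | h
      · rw [if_pos (by omega), if_pos h.le, if_pos (by omega),
          show m + 1 + 1 - (#t + 1) = (m + 1 - (#t + 1)) + 1 by omega,
          completeHomogeneous_cons_succ, show m + 1 - (#t + 1) + 1 = m + 1 - #t by omega]
        ring
      · rw [if_neg (by omega), if_pos h.le, if_pos (by omega), h, Nat.sub_self,
          Nat.sub_self, completeHomogeneous_zero, completeHomogeneous_zero]
        ring
      · rw [if_neg (by omega), if_neg (by omega), if_neg (by omega)]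
        ring

theorem hasSum_divDiff [TopologicalSpace F] [IsTopologicalRing F] {a : ℕ → F} {f : F → F}
    (hf : ∀ i ∈ s, HasSum (fun n => a n * v i ^ n) (f (v i))) :
    HasSum (fun n => a n * divDiff s v (· ^ n)) (divDiff s v f) := by
  simp only [divDiff, mul_sum, ← mul_div_assoc]
  exact hasSum_sum fun i hi => (hf i hi).div_const _

end DividedDifference


open Real in
theorem hasSum_exp_sub_exp (α w : ℝ) :
    HasSum (fun n => (1 - (1 - α) ^ n) / n.factorial * w ^ n) (exp w - exp ((1 - α) * w)) := by
  rw [exp_eq_exp_ℝ]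
  refine ((NormedSpace.expSeries_div_hasSum_exp w).sub
    (NormedSpace.expSeries_div_hasSum_exp ((1 - α) * w))).congr_fun fun n => ?_
  rw [mul_pow]
  ring

open Real in
theorem hasSum_exp_sub_exp_div_sq (α : ℝ) {w : ℝ} (hw : w ≠ 0) :
    HasSum (fun n => (1 - (1 - α) ^ (n + 2)) / (n + 2).factorial * w ^ n)
      ((exp w - exp ((1 - α) * w) - α * w) / w ^ 2) := by
  have h := ((hasSum_nat_add_iff' 2).2 (hasSum_exp_sub_exp α w)).div_const (w ^ 2)
  simp only [sum_range_succ, sum_range_zero, pow_zero, pow_one, Nat.factorial_zero,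
    Nat.factorial_one, sub_self, zero_mul, zero_add, Nat.cast_one, div_one, sub_sub_cancel] at h
  refine h.congr_fun fun n => ?_
  field_simp
  ring

theorem Icc_one_eq_map_fin (j : ℕ) :
    Icc 1 j = univ.map (Fin.valEmbedding.trans (addRightEmbedding 1) : Fin j ↪ ℕ) := by
  ext t
  simp only [mem_Icc, mem_map, mem_univ, true_and, Function.Embedding.trans_apply,
    Fin.valEmbedding_apply, addRightEmbedding_apply]
  constructor
  · rintro ⟨h1, h2⟩
    exact ⟨⟨t - 1, by omega⟩, by simp only; omega⟩
  · rintro ⟨l, rfl⟩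
    omega

theorem divDiff_Icc_pow {F : Type*} [Field F] {μ : ℕ → F} {j : ℕ} (hμ : Set.InjOn μ (Icc 1 j))
    (m : ℕ) :
    divDiff (Icc 1 j) μ (· ^ m) =
      if j ≤ m + 1 then
        ∑ c ∈ Nat.antidiagonalTuple j (m + 1 - j), ∏ l : Fin j, μ ((l : ℕ) + 1) ^ c l
      else 0 := by
  rw [Icc_one_eq_map_fin] at hμ ⊢
  rw [divDiff_map, divDiff_pow, card_univ, Fintype.card_fin, completeHomogeneous,
    piAntidiag_univ_fin_eq_antidiagonalTuple]
  · rfl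
  · exact hμ.comp (Fin.valEmbedding.trans (addRightEmbedding 1)).injective.injOn
      fun l _ => mem_map_of_mem _ (mem_univ l)

open Real in
theorem epsCoef_eq_mul_divDiff {j : ℕ} (hj : 1 ≤ j) (α : ℝ) {μ : ℕ → ℝ}
    (hμ : Set.InjOn μ (Icc 1 j)) (h0 : ∀ i ∈ Icc 1 j, μ i ≠ 0) :
    epsCoef j α μ = (∏ t ∈ Icc 1 j, μ t) *
      divDiff (Icc 1 j) μ (fun w => (exp w - exp ((1 - α) * w) - α * w) / w ^ 2) := by
  set f : ℝ → ℝ := fun w => (exp w - exp ((1 - α) * w) - α * w) / w ^ 2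
  set P := ∏ t ∈ Icc 1 j, μ t
  have hterm : ∀ i ∈ Icc 1 j, betaCoef j μ i * (1 - exp (-α * μ i)) =
      (-1) ^ (j - 1) * P * ((f (μ i) + α * (μ i)⁻¹) / ∏ t ∈ (Icc 1 j).erase i, (μ i - μ t)) :=
    fun i hi => by
      have hx := h0 i hi
      have hf : f (μ i) + α * (μ i)⁻¹ = exp (μ i) * (1 - exp (-α * μ i)) / μ i ^ 2 := by
        have hexp : exp ((1 - α) * μ i) = exp (μ i) * exp (-α * μ i) := by
          rw [← exp_add]; ring_nf
        simp only [f, hexp]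
        field_simp
        ring
      rw [betaCoef, hf]
      ring
  have hP : P ≠ 0 := prod_ne_zero_iff.2 h0
  have hσ : ((-1 : ℝ) ^ (j - 1)) * (-1) ^ (j - 1) = 1 := by rw [← mul_pow]; norm_num
  have hinv : divDiff (Icc 1 j) μ (·⁻¹) = (-1) ^ (j - 1) / P := by
    simpa using divDiff_inv hμ (nonempty_Icc.2 hj) h0
  have hsum : ∑ i ∈ Icc 1 j, (f (μ i) + α * (μ i)⁻¹) / ∏ t ∈ (Icc 1 j).erase i, (μ i - μ t) =
      divDiff (Icc 1 j) μ (fun w => f w + α * w⁻¹) := rfl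
  rw [epsCoef, sum_congr rfl hterm, ← mul_sum, hsum, divDiff_add, divDiff_const_mul, hinv]
  field_simp
  linear_combination (P * divDiff (Icc 1 j) μ f + (-1) ^ (j - 1) * α) * hσ

open Real in
theorem hasSum_divDiff_exp_sub_exp_div_sq {j : ℕ} (hj : 1 ≤ j) (α : ℝ) {μ : ℕ → ℝ}
    (hμ : Set.InjOn μ (Icc 1 j)) (h0 : ∀ i ∈ Icc 1 j, μ i ≠ 0) :
    HasSum (fun n : ℕ =>
        if j + 1 ≤ n then
          ∑ c ∈ Nat.antidiagonalTuple j (n - 1 - j),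
            (1 - (1 - α) ^ n) / (n.factorial : ℝ) * ∏ l : Fin j, μ ((l : ℕ) + 1) ^ c l
        else 0)
      (divDiff (Icc 1 j) μ (fun w => (exp w - exp ((1 - α) * w) - α * w) / w ^ 2)) := by
  rw [← hasSum_nat_add_iff' 2]
  simp only [sum_range_succ, sum_range_zero, if_neg (show ¬j + 1 ≤ 0 by omega),
    if_neg (show ¬j + 1 ≤ 1 by omega), add_zero, sub_zero]
  refine (hasSum_divDiff (f := fun w => (exp w - exp ((1 - α) * w) - α * w) / w ^ 2)
    fun i hi => hasSum_exp_sub_exp_div_sq α (h0 i hi)).congr_fun fun n => ?_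
  rw [divDiff_Icc_pow hμ, mul_ite, mul_zero, mul_sum, show n + 2 - 1 - j = n + 1 - j by omega]
  exact if_congr (by omega) rfl rfl

/-- Series expansion of `ε^j_α`: for `0 < α ≤ 1` and `0 < μ_1 < … < μ_j`,
`ε^j_α = μ_1⋯μ_j Σ_{n=j+1}^∞ Σ_{i_1+…+i_j=n-1-j} (1-(1-α)^n)/n! μ_1^{i_1}⋯μ_j^{i_j}`,
and in particular `ε^j_α ≥ 0`. -/
theorem epsCoef_series (j : ℕ) (hj : 1 ≤ j) (α : ℝ) (hα0 : 0 < α) (hα1 : α ≤ 1)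
    (μ : ℕ → ℝ) (hpos : ∀ i, 1 ≤ i → i ≤ j → 0 < μ i)
    (hmono : ∀ i i', 1 ≤ i → i < i' → i' ≤ j → μ i < μ i') :
    epsCoef j α μ =
      (∏ t ∈ Finset.Icc 1 j, μ t) *
        ∑' n : ℕ,
          (if j + 1 ≤ n then
            ∑ c ∈ Finset.Nat.antidiagonalTuple j (n - 1 - j),
              (1 - (1 - α) ^ n) / (n.factorial : ℝ) *
                ∏ l : Fin j, μ ((l : ℕ) + 1) ^ c l
          else 0) ∧
    0 ≤ epsCoef j α μ := by
  have hμ : Set.InjOn μ (Icc 1 j) := StrictMonoOn.injOn fun i hi i' hi' h => by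
    rw [coe_Icc, Set.mem_Icc] at hi hi'
    exact hmono i i' hi.1 h hi'.2
  have hpos' : ∀ i ∈ Icc 1 j, 0 < μ i := fun i hi => hpos i (mem_Icc.1 hi).1 (mem_Icc.1 hi).2
  have h0 : ∀ i ∈ Icc 1 j, μ i ≠ 0 := fun i hi => (hpos' i hi).ne'
  rw [epsCoef_eq_mul_divDiff hj α hμ h0,
    ← (hasSum_divDiff_exp_sub_exp_div_sq hj α hμ h0).tsum_eq]
  refine ⟨rfl, mul_nonneg (prod_nonneg fun i hi => (hpos' i hi).le) (tsum_nonneg fun n => ?_)⟩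
  split_ifs
  · have hc : 0 ≤ 1 - (1 - α) ^ n := sub_nonneg.2 (pow_le_one₀ (by linarith) (by linarith))
    exact sum_nonneg fun c _ => mul_nonneg (div_nonneg hc (Nat.cast_nonneg _))
      (prod_nonneg fun l _ => pow_nonneg (hpos _ (by omega) (by omega)).le _)
  · exact le_rfl
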